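/- arXiv:1202.0138 — 2 statements merged into one kernel-verified Lean document; each statement's English description precedes it below -/
import Mathlib

section
/- Let α be a unit-speed timelike curve in R³₁ with k₁ ≠ 0 and β a curve with β' = B. The ruled surface β(s) + vT(s) has distribution parameter P̃_T = det(B, T, T')/⟨T',T'⟩ = 1/k₁; in particular it is not developable. -/
noncomputable def mink (u v : Fin 3 → ℝ) : ℝ := u 0 * v 0 + u 1 * v 1 - u 2 * v 2

noncomputable def det3 (u v w : Fin 3 → ℝ) : ℝ :=
  Matrix.det !![u 0, u 1, u 2; v 0, v 1, v 2; w 0, w 1, w 2]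

theorem stmt14
    (α T N B : ℝ → Fin 3 → ℝ) (k₁ k₂ : ℝ → ℝ)
    (hα : ∀ s, HasDerivAt α (T s) s)
    (hTT : ∀ s, mink (T s) (T s) = -1)
    (hNN : ∀ s, mink (N s) (N s) = 1)
    (hBB : ∀ s, mink (B s) (B s) = 1)
    (hTN : ∀ s, mink (T s) (N s) = 0)
    (hTB : ∀ s, mink (T s) (B s) = 0)
    (hNB : ∀ s, mink (N s) (B s) = 0)
    (hdet : ∀ s, det3 (T s) (N s) (B s) = 1)
    (hT : ∀ s, HasDerivAt T (k₁ s • N s) s)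
    (hN : ∀ s, HasDerivAt N (k₁ s • T s + k₂ s • B s) s)
    (hB : ∀ s, HasDerivAt B ((-(k₂ s)) • N s) s)
    (hk₁ : ∀ s, k₁ s ≠ 0)
    (β : ℝ → Fin 3 → ℝ) (hβ : ∀ s, HasDerivAt β (B s) s) :
    ∀ s, det3 (deriv β s) (T s) (deriv T s) / mink (deriv T s) (deriv T s) = 1 / k₁ s ∧
      det3 (deriv β s) (T s) (deriv T s) / mink (deriv T s) (deriv T s) ≠ 0 := by
  intro s
  have hβ' : deriv β s = B s := (hβ s).deriv
  have hT' : deriv T s = k₁ s • N s := (hT s).deriv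
  rw [hβ', hT']
  have hd := hdet s
  have hn := hNN s
  have hk := hk₁ s
  have e1 : det3 (B s) (T s) (k₁ s • N s) = k₁ s := by
    simp [det3, Matrix.det_fin_three, mink] at hd ⊢
    linear_combination k₁ s * hd
  have e2 : mink (k₁ s • N s) (k₁ s • N s) = k₁ s * k₁ s := by
    simp only [mink, Pi.smul_apply, smul_eq_mul] at hn ⊢
    linear_combination (k₁ s * k₁ s) * hn
  rw [e1, e2]
  refine ⟨by field_simp, by positivity⟩
end

section
/- Let α be a unit-speed timelike curve in R³₁, β with β' = B, and X = x₁T + x₃B in the rectifying plane with x₁k₁ - x₃k₂ ≠ 0. Then P̃_X = x₁/(x₁k₁ - x₃k₂), which vanishes if and only if x₁ = 0. -/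
/-! Along the rectifying direction `X = x₁ T + x₃ B` the Frenet equations give
`X' = (x₁ k₁ - x₃ k₂) N`, so with `β' = B` the numerator of `P̃_X` is
`det (B, x₁ T + x₃ B, c N) = x₁ c det (T, N, B) = x₁ c` and its denominator is `c² ⟨N, N⟩ = c²`. -/

theorem mink_smul_smul (a b : ℝ) (u v : Fin 3 → ℝ) :
    mink (a • u) (b • v) = a * b * mink u v := by
  simp only [mink, Pi.smul_apply, smul_eq_mul]
  ring

theorem det3_smul_add_smul_self_smul (a b c : ℝ) (u v w : Fin 3 → ℝ) :
    det3 w (a • u + b • w) (c • v) = a * c * det3 u v w := by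
  simp only [det3, Pi.add_apply, Pi.smul_apply, smul_eq_mul, Matrix.det_fin_three, Matrix.of_apply,
    Matrix.cons_val', Matrix.cons_val_zero, Matrix.cons_val_fin_one, Matrix.cons_val_one, Matrix.cons_val]
  ring

theorem hasDerivAt_smul_add_smul_of_frenet {T B : ℝ → Fin 3 → ℝ} {n : Fin 3 → ℝ}
    {k₁ k₂ s : ℝ} (hT : HasDerivAt T (k₁ • n) s) (hB : HasDerivAt B (-k₂ • n) s) (x₁ x₃ : ℝ) :
    HasDerivAt (fun t => x₁ • T t + x₃ • B t) ((x₁ * k₁ - x₃ * k₂) • n) s :=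
  ((hT.const_smul x₁).add (hB.const_smul x₃)).congr_deriv (by module)

theorem stmt17_general
    (T N B : ℝ → Fin 3 → ℝ) (k₁ k₂ : ℝ → ℝ)
    (hNN : ∀ s, mink (N s) (N s) = 1)
    (hdet : ∀ s, det3 (T s) (N s) (B s) = 1)
    (hT : ∀ s, HasDerivAt T (k₁ s • N s) s)
    (hB : ∀ s, HasDerivAt B ((-(k₂ s)) • N s) s)
    (β : ℝ → Fin 3 → ℝ) (hβ : ∀ s, HasDerivAt β (B s) s)
    (x₁ x₃ : ℝ) (hnz : ∀ s, x₁ * k₁ s - x₃ * k₂ s ≠ 0)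
    (X : ℝ → Fin 3 → ℝ) (hX : ∀ s, X s = x₁ • T s + x₃ • B s) :
    ∀ s, det3 (deriv β s) (X s) (deriv X s) / mink (deriv X s) (deriv X s) = x₁ / (x₁ * k₁ s - x₃ * k₂ s) ∧
      (det3 (deriv β s) (X s) (deriv X s) / mink (deriv X s) (deriv X s) = 0 ↔ x₁ = 0) := by
  intro s
  set c := x₁ * k₁ s - x₃ * k₂ s
  have hX' : deriv X s = c • N s := by
    rw [funext hX]
    exact (hasDerivAt_smul_add_smul_of_frenet (hT s) (hB s) x₁ x₃).deriv
  have hnum : det3 (deriv β s) (X s) (deriv X s) = x₁ * c := by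
    rw [(hβ s).deriv, hX', hX s, det3_smul_add_smul_self_smul, hdet s, mul_one]
  have hden : mink (deriv X s) (deriv X s) = c * c := by
    rw [hX', mink_smul_smul, hNN s, mul_one]
  have hval : x₁ * c / (c * c) = x₁ / c := mul_div_mul_right x₁ c (hnz s)
  rw [hnum, hden, hval, div_eq_zero_iff, or_iff_left (hnz s)]
  exact ⟨rfl, Iff.rfl⟩

theorem stmt17
    (α T N B : ℝ → Fin 3 → ℝ) (k₁ k₂ : ℝ → ℝ)
    (hα : ∀ s, HasDerivAt α (T s) s)
    (hTT : ∀ s, mink (T s) (T s) = -1)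
    (hNN : ∀ s, mink (N s) (N s) = 1)
    (hBB : ∀ s, mink (B s) (B s) = 1)
    (hTN : ∀ s, mink (T s) (N s) = 0)
    (hTB : ∀ s, mink (T s) (B s) = 0)
    (hNB : ∀ s, mink (N s) (B s) = 0)
    (hdet : ∀ s, det3 (T s) (N s) (B s) = 1)
    (hT : ∀ s, HasDerivAt T (k₁ s • N s) s)
    (hN : ∀ s, HasDerivAt N (k₁ s • T s + k₂ s • B s) s)
    (hB : ∀ s, HasDerivAt B ((-(k₂ s)) • N s) s)
    (β : ℝ → Fin 3 → ℝ) (hβ : ∀ s, HasDerivAt β (B s) s)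
    (x₁ x₃ : ℝ) (hnz : ∀ s, x₁ * k₁ s - x₃ * k₂ s ≠ 0)
    (X : ℝ → Fin 3 → ℝ) (hX : ∀ s, X s = x₁ • T s + x₃ • B s) :
    ∀ s, det3 (deriv β s) (X s) (deriv X s) / mink (deriv X s) (deriv X s) = x₁ / (x₁ * k₁ s - x₃ * k₂ s) ∧
      (det3 (deriv β s) (X s) (deriv X s) / mink (deriv X s) (deriv X s) = 0 ↔ x₁ = 0) :=
  stmt17_general T N B k₁ k₂ hNN hdet hT hB β hβ x₁ x₃ hnz X hX
end
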